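/- For all integers n, k with 2 ≤ k ≤ 2n − 3, there exists a connected simple graph G on n vertices with sum index s(G) = k. -/

import Mathlib

open SimpleGraph Function

def edgePlus {V : Type*} (f : V → ℤ) : Sym2 V → ℤ :=
  Sym2.lift ⟨fun u v => f u + f v, fun u v => by ring⟩

def edgeMinus {V : Type*} (f : V → ℤ) : Sym2 V → ℤ :=
  Sym2.lift ⟨fun u v => |f u - f v|, fun u v => abs_sub_comm _ _⟩

/-- The sum index: the minimum, over injective vertex labelings `f : V → ℤ`,
of the number of distinct values of `f⁺(uv) = f u + f v` on the edges. -/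
noncomputable def sumIndex {V : Type*} (G : SimpleGraph V) : ℕ :=
  sInf {k | ∃ f : V → ℤ, Function.Injective f ∧ (edgePlus f '' G.edgeSet).ncard = k}

/-- The difference index: the minimum, over injective vertex labelings `f : V → ℤ`,
of the number of distinct values of `f⁻(uv) = |f u − f v|` on the edges. -/
noncomputable def diffIndex {V : Type*} (G : SimpleGraph V) : ℕ :=
  sInf {k | ∃ f : V → ℤ, Function.Injective f ∧ (edgeMinus f '' G.edgeSet).ncard = k}

/-! Take the vertices `0, …, t`, `t = k / 2 + 1`, to span a clique, minus the edge `{t - 1, t}`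
when `k` is even, and let the remaining vertices form a path hanging off `t`. Labelling `i ≤ t` by
`i` and the path by `t, -1, t + 1, -2, …` makes every edge sum lie in `[1, k]`: the path sums
alternate between `t - 1` and `t`. Conversely, for any injective labelling of a clique with
`m` vertices, `a` the least and `b` the greatest label, the sums `a + y` are at most `a + b` and the
sums `y + b` with `y ≠ a` exceed it, giving `2m - 3` distinct sums; the deleted edge loses at most
one of them, and `2 (t + 1) - 3 - [k even] = k`. -/

open Finset

section RestrictedSumset

variable {α : Type*} [AddCommMonoid α] [LinearOrder α] [IsOrderedCancelAddMonoid α]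

theorem two_mul_card_sub_three_le_card_image_offDiag_add [DecidableEq α] (A : Finset α) :
    2 * #A - 3 ≤ #(A.offDiag.image fun p => p.1 + p.2) := by
  rcases A.eq_empty_or_nonempty with rfl | hA
  · simp
  set a := A.min' hA
  set b := A.max' hA
  set low := (A.erase a).image (a + ·)
  set high := ((A.erase a).erase b).image (· + b)
  have hlow : #low = #A - 1 := by
    rw [card_image_of_injective _ (add_right_injective a),
      card_erase_of_mem (A.min'_mem hA)]
  have hhigh : #A - 2 ≤ #high := by
    rw [card_image_of_injective _ (add_left_injective b)]
    have h1 := pred_card_le_card_erase (s := A) (a := a)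
    have h2 := pred_card_le_card_erase (s := A.erase a) (a := b)
    omega
  have hdisj : Disjoint low high := by
    rw [Finset.disjoint_left]
    simp only [low, high, mem_image, mem_erase]
    rintro _ ⟨y, ⟨-, hy⟩, rfl⟩ ⟨z, ⟨-, hza, hz⟩, hzy⟩
    have hyb : y ≤ b := A.le_max' y hy
    have haz : a < z := lt_of_le_of_ne (A.min'_le z hz) (Ne.symm hza)
    have : a + y < z + b := add_lt_add_of_lt_of_le haz hyb
    exact this.ne' hzy
  have hsub : low ∪ high ⊆ A.offDiag.image fun p => p.1 + p.2 := by
    simp only [low, high, union_subset_iff, image_subset_iff, mem_erase,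
      mem_image, mem_offDiag]
    refine ⟨fun y ⟨hya, hy⟩ => ⟨(a, y), ⟨A.min'_mem hA, hy, Ne.symm hya⟩, rfl⟩,
      fun z ⟨hzb, _, hz⟩ => ⟨(z, b), ⟨hz, A.max'_mem hA, hzb⟩, rfl⟩⟩
  have := card_le_card hsub
  rw [card_union_of_disjoint hdisj] at this
  have : 0 < #A := hA.card_pos
  omega

end RestrictedSumset

section EdgeSums

variable {V : Type*} (G : SimpleGraph V)

theorem sumIndex_le_ncard {f : V → ℤ} (hf : Injective f) :
    sumIndex G ≤ (edgePlus f '' G.edgeSet).ncard :=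
  Nat.sInf_le ⟨f, hf, rfl⟩

theorem le_sumIndex [Countable V] {k : ℕ}
    (h : ∀ f : V → ℤ, Injective f → k ≤ (edgePlus f '' G.edgeSet).ncard) : k ≤ sumIndex G := by
  obtain ⟨e, he⟩ := Countable.exists_injective_nat V
  refine le_csInf ⟨_, fun v => (e v : ℤ), Nat.cast_injective.comp he, rfl⟩ ?_
  rintro _ ⟨f, hf, rfl⟩
  exact h f hf

theorem image_edgePlus_subset {f : V → ℤ} {S : Set ℤ} (h : ∀ u v, G.Adj u v → f u + f v ∈ S) :
    edgePlus f '' G.edgeSet ⊆ S := by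
  rintro _ ⟨e, he, rfl⟩
  induction e using Sym2.ind with
  | _ u v => exact h u v he

theorem two_mul_card_sub_three_sub_card_le_ncard_image_edgePlus [Finite V] {g : V → ℤ}
    (hg : Injective g) (s : Finset V) (bad : Finset (Sym2 V))
    (hs : ∀ u ∈ s, ∀ v ∈ s, u ≠ v → s(u, v) ∉ bad → G.Adj u v) :
    2 * #s - 3 - #bad ≤ (edgePlus g '' G.edgeSet).ncard := by
  classical
  set R := (s.image g).offDiag.image fun p => p.1 + p.2
  have hR : (R : Set ℤ) ⊆ edgePlus g '' G.edgeSet ∪ ↑(bad.image (edgePlus g)) := by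
    intro x hx
    simp only [R, coe_image, coe_offDiag, Set.mem_image, Set.mem_offDiag,
      mem_coe] at hx
    obtain ⟨⟨_, _⟩, ⟨⟨u, hu, rfl⟩, ⟨v, hv, rfl⟩, huv⟩, rfl⟩ := hx
    by_cases hb : s(u, v) ∈ bad
    · exact Or.inr (mem_image_of_mem _ hb)
    · exact Or.inl ⟨s(u, v), hs u hu v hv (fun h => huv (h ▸ rfl)) hb, rfl⟩
  have hcard : #R ≤ (edgePlus g '' G.edgeSet).ncard + #bad := by
    calc #R = (R : Set ℤ).ncard := (Set.ncard_coe_finset R).symm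
      _ ≤ (edgePlus g '' G.edgeSet ∪ ↑(bad.image (edgePlus g))).ncard :=
        Set.ncard_le_ncard hR (Set.toFinite _)
      _ ≤ (edgePlus g '' G.edgeSet).ncard + (↑(bad.image (edgePlus g)) : Set ℤ).ncard :=
        Set.ncard_union_le _ _
      _ ≤ (edgePlus g '' G.edgeSet).ncard + #bad := by
        rw [Set.ncard_coe_finset]
        exact Nat.add_le_add_left card_image_le _
  have hsum : 2 * #s - 3 ≤ #R := by
    simpa only [card_image_of_injective s hg] using
      two_mul_card_sub_three_le_card_image_offDiag_add (s.image g)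
  omega

end EdgeSums

theorem SimpleGraph.connected_of_forall_exists_adj_lt {V : Type*} [Preorder V] [WellFoundedLT V]
    (G : SimpleGraph V) (r : V) (h : ∀ v ≠ r, ∃ w < v, G.Adj v w) : G.Connected := by
  have hreach : ∀ v, G.Reachable r v := fun v => by
    induction v using WellFoundedLT.induction with
    | _ v ih =>
      by_cases hv : v = r
      · subst hv; rfl
      · obtain ⟨w, hwv, hadj⟩ := h v hv
        exact (ih w hwv).trans hadj.symm.reachable
  exact G.connected_iff_exists_forall_reachable.2 ⟨r, hreach⟩

def tailLabel (t i : ℕ) : ℤ :=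
  if i ≤ t then i else if (i - t) % 2 = 0 then t + ((i - t) / 2 : ℕ) else -((i - t + 1) / 2 : ℕ)

theorem tailLabel_of_le {t i : ℕ} (h : i ≤ t) : tailLabel t i = i := if_pos h

theorem tailLabel_injective (t : ℕ) : Injective (tailLabel t) := by
  intro i j h
  simp only [tailLabel] at h
  split_ifs at h <;> omega

theorem tailLabel_add_tailLabel_succ_mem {t i : ℕ} (h : t ≤ i) :
    tailLabel t i + tailLabel t (i + 1) ∈ Set.Icc ((t : ℤ) - 1) t := by
  simp only [tailLabel, Set.mem_Icc]
  split_ifs <;> omega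

/-- The clique edges are the pairs with index sum at most `k`: all of them when `k = 2t - 1`, all
but `{t - 1, t}` when `k = 2t - 2`. -/
def tailedClique (n k : ℕ) : SimpleGraph (Fin n) :=
  SimpleGraph.fromRel fun i j =>
    (i.val ≤ k / 2 + 1 ∧ j.val ≤ k / 2 + 1 ∧ i.val + j.val ≤ k) ∨
      (k / 2 + 1 ≤ i.val ∧ j.val = i.val + 1)

theorem tailedClique_connected {n k : ℕ} (hk : 1 ≤ k) (hn : 0 < n) :
    (tailedClique n k).Connected := by
  refine connected_of_forall_exists_adj_lt _ ⟨0, hn⟩ fun v hv => ?_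
  have hv : (⟨0, hn⟩ : Fin n) < v := Fin.lt_def.2 (Nat.pos_of_ne_zero fun h => hv (Fin.ext h))
  by_cases hvt : v.val ≤ k / 2 + 1
  · exact ⟨_, hv, Fin.ne_of_gt hv, Or.inr (Or.inl ⟨Nat.zero_le _, hvt, by dsimp only; omega⟩)⟩
  · have hlt : (⟨v.val - 1, by omega⟩ : Fin n) < v := Fin.lt_def.2 (by dsimp only; omega)
    exact ⟨_, hlt, Fin.ne_of_gt hlt,
      Or.inr (Or.inr ⟨by dsimp only; omega, by dsimp only; omega⟩)⟩

theorem image_edgePlus_tailLabel_subset {n k : ℕ} (hk : 2 ≤ k) :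
    edgePlus (fun i : Fin n => tailLabel (k / 2 + 1) i) '' (tailedClique n k).edgeSet ⊆
      Set.Icc 1 k := by
  have htail : ∀ i : ℕ, k / 2 + 1 ≤ i →
      tailLabel (k / 2 + 1) i + tailLabel (k / 2 + 1) (i + 1) ∈ Set.Icc (1 : ℤ) k := fun i hi =>
    Set.Icc_subset_Icc (by omega) (by omega) (tailLabel_add_tailLabel_succ_mem hi)
  refine image_edgePlus_subset _ fun u v ⟨huv, hadj⟩ => ?_
  have huv : u.val ≠ v.val := fun h => huv (Fin.ext h)
  rcases hadj with (⟨hu, hv, hsum⟩ | ⟨hu, hv⟩) | (⟨hv, hu, hsum⟩ | ⟨hv, hu⟩)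
  · rw [tailLabel_of_le hu, tailLabel_of_le hv, Set.mem_Icc]
    omega
  · exact hv ▸ htail _ hu
  · rw [tailLabel_of_le hu, tailLabel_of_le hv, Set.mem_Icc]
    omega
  · exact hu ▸ add_comm (tailLabel _ v.val) _ ▸ htail _ hv

theorem le_ncard_image_edgePlus_tailedClique {n k : ℕ} (hn : k / 2 + 1 < n) {g : Fin n → ℤ}
    (hg : Injective g) : k ≤ (edgePlus g '' (tailedClique n k).edgeSet).ncard := by
  set s := Iic (⟨k / 2 + 1, hn⟩ : Fin n)
  have hs : #s = k / 2 + 2 := Fin.card_Iic _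
  have hmem : ∀ u, u ∈ s ↔ u.val ≤ k / 2 + 1 := fun u => by simp [s, Fin.le_def]
  have hadj : ∀ u ∈ s, ∀ v ∈ s, u ≠ v → u.val + v.val ≤ k → (tailedClique n k).Adj u v :=
    fun u hu v hv huv hsum => ⟨huv, Or.inl (Or.inl ⟨(hmem u).1 hu, (hmem v).1 hv, hsum⟩)⟩
  rcases Nat.even_or_odd k with ⟨r, hr⟩ | ⟨r, hr⟩
  · have := two_mul_card_sub_three_sub_card_le_ncard_image_edgePlus _ hg s
      {s(⟨k / 2, by omega⟩, ⟨k / 2 + 1, hn⟩)} fun u hu v hv huv hbad => by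
        refine hadj u hu v hv huv ?_
        have hu := (hmem u).1 hu
        have hv := (hmem v).1 hv
        have huv : u.val ≠ v.val := fun h => huv (Fin.ext h)
        by_contra hsum
        refine hbad (mem_singleton.2 (Sym2.eq_iff.2 ?_))
        by_cases h : u.val < v.val
        · exact Or.inl ⟨Fin.ext (by dsimp only; omega), Fin.ext (by dsimp only; omega)⟩
        · exact Or.inr ⟨Fin.ext (by dsimp only; omega), Fin.ext (by dsimp only; omega)⟩
    rw [hs, card_singleton] at this
    omega
  · have := two_mul_card_sub_three_sub_card_le_ncard_image_edgePlus _ hg s ∅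
      fun u hu v hv huv _ => hadj u hu v hv huv <| by
        have := (hmem u).1 hu; have := (hmem v).1 hv; omega
    rw [hs, card_empty] at this
    omega

theorem sumIndex_tailedClique {n k : ℕ} (hk : 2 ≤ k) (hn : k / 2 + 1 < n) :
    sumIndex (tailedClique n k) = k := by
  refine le_antisymm ?_ (le_sumIndex _ fun g hg => le_ncard_image_edgePlus_tailedClique hn hg)
  calc sumIndex (tailedClique n k)
      ≤ (edgePlus (fun i : Fin n => tailLabel (k / 2 + 1) i) '' (tailedClique n k).edgeSet).ncard :=
        sumIndex_le_ncard _ ((tailLabel_injective _).comp Fin.val_injective)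
    _ ≤ (Set.Icc (1 : ℤ) k).ncard :=
        Set.ncard_le_ncard (image_edgePlus_tailLabel_subset hk) (Set.finite_Icc _ _)
    _ = k := by simp [← coe_Icc, Set.ncard_coe_finset]

theorem stmt11 (n k : ℕ) (hk : 2 ≤ k) (hkn : k ≤ 2 * n - 3) :
    ∃ G : SimpleGraph (Fin n), G.Connected ∧ sumIndex G = k :=
  ⟨tailedClique n k, tailedClique_connected (by omega) (by omega),
    sumIndex_tailedClique hk (by omega)⟩
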